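/- arXiv:1501.07635 — 2 statements merged into one kernel-verified Lean document; each statement's English description precedes it below -/
import Mathlib

section
/- Let ρ₀, ρ₁ be densities of mass V with ρ₁ > 0 λ-almost everywhere, and assume the function ρ₀ · log(ρ₀/ρ₁) (with the convention 0 · log(0/ρ₁) = 0) is λ-integrable. With the Kullback–Leibler divergence d_KL(ρ₀, ρ₁) := ∫ ρ₀ log(ρ₀/ρ₁) dλ, the Fisher–Rao distance satisfies d_F(ρ₀, ρ₁) ≤ √((π/2) · d_KL(ρ₀, ρ₁)); in particular d_KL(ρ₀, ρ₁) ≥ 0. (Item 8 of the Proposition in Appendix B.) -/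
/-!
With the Bhattacharyya coefficient `c = (1/V) ∫ √(ρ₀ ρ₁) ∈ [0, 1]` we have `d_F² = V arccos² c`.
Integrating the pointwise bound `ρ₀ log(ρ₀/ρ₁) ≥ 2 (ρ₀ - √(ρ₀ ρ₁))` (which is `log y ≥ 1 - 1/y`
at `y = √(ρ₀/ρ₁)`) gives `d_KL ≥ 2V(1 - c)`, and `arccos² c ≤ π (1 - c)` closes the gap.
-/

open MeasureTheory Real Set

/-- A density of mass `V`: a measurable nonnegative function with total integral `V`. -/
def IsDensity {X : Type*} [MeasurableSpace X] (lam : Measure X) (V : ℝ) (ρ : X → ℝ) : Prop :=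
  Measurable ρ ∧ (∀ x, 0 ≤ ρ x) ∧ (∫ x, ρ x ∂lam) = V

/-- The Fisher–Rao (spherical Hellinger) distance between two densities. -/
noncomputable def fisherRaoDist {X : Type*} [MeasurableSpace X] (lam : Measure X) (V : ℝ)
    (ρ₀ ρ₁ : X → ℝ) : ℝ :=
  Real.sqrt V * Real.arccos ((1 / V) * ∫ x, Real.sqrt (ρ₀ x * ρ₁ x) ∂lam)

/-- The Kullback–Leibler divergence `∫ ρ₀ log(ρ₀/ρ₁) dλ`.
(Note that in Lean `0 * Real.log (0 / ρ₁ x) = 0`, which realizes the convention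
`0·log(0/ρ₁) = 0`.) -/
noncomputable def klDiv {X : Type*} [MeasurableSpace X] (lam : Measure X)
    (ρ₀ ρ₁ : X → ℝ) : ℝ :=
  ∫ x, ρ₀ x * Real.log (ρ₀ x / ρ₁ x) ∂lam

namespace Real

lemma sq_le_pi_mul_one_sub_cos {θ : ℝ} (h₀ : 0 ≤ θ) (h₁ : θ ≤ π / 2) :
    θ ^ 2 ≤ π * (1 - cos θ) := by
  -- `π (1 - cos t) - t²` has derivative `π sin t - 2t ≥ 0` on `[0, π/2]` by Jordan's inequality.
  have hmono : MonotoneOn (fun t ↦ π * (1 - cos t) - t ^ 2) (Icc 0 (π / 2)) := by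
    refine monotoneOn_of_hasDerivWithinAt_nonneg (f' := fun t ↦ π * sin t - 2 * t)
      (convex_Icc _ _) (by fun_prop) (fun t _ ↦ ?_) (fun t ht ↦ ?_)
    · exact ((((hasDerivAt_cos t).const_sub 1).const_mul π).sub (hasDerivAt_pow 2 t)
        |>.congr_deriv (by ring)).hasDerivWithinAt
    · rw [interior_Icc] at ht
      have hjordan := mul_le_mul_of_nonneg_left (mul_le_sin ht.1.le ht.2.le) pi_pos.le
      rw [← mul_assoc, mul_div_cancel₀ _ pi_ne_zero] at hjordan
      linarith
  simpa using hmono (left_mem_Icc.2 (by positivity)) ⟨h₀, h₁⟩ h₀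

lemma arccos_sq_le_pi_mul_one_sub {c : ℝ} (h₀ : 0 ≤ c) (h₁ : c ≤ 1) :
    arccos c ^ 2 ≤ π * (1 - c) := by
  simpa [cos_arccos (by linarith) h₁] using
    sq_le_pi_mul_one_sub_cos (arccos_nonneg c) (arccos_le_pi_div_two.2 h₀)

lemma two_mul_sub_sqrt_mul_le_mul_log_div {a b : ℝ} (ha : 0 ≤ a) (hb : 0 < b) :
    2 * (a - √(a * b)) ≤ a * log (a / b) := by
  rcases ha.eq_or_lt with rfl | ha
  · simp
  obtain ⟨s, hs, rfl⟩ : ∃ s, 0 < s ∧ s ^ 2 = a := ⟨√a, sqrt_pos.2 ha, sq_sqrt ha.le⟩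
  obtain ⟨t, ht, rfl⟩ : ∃ t, 0 < t ∧ t ^ 2 = b := ⟨√b, sqrt_pos.2 hb, sq_sqrt hb.le⟩
  have hlog : 1 - t / s ≤ log (s / t) := by
    simpa using one_sub_inv_le_log_of_pos (div_pos hs ht)
  rw [← mul_pow, sqrt_sq (by positivity), ← div_pow, log_pow, Nat.cast_ofNat]
  calc 2 * (s ^ 2 - s * t) = 2 * s ^ 2 * (1 - t / s) := by field_simp
    _ ≤ s ^ 2 * (2 * log (s / t)) := by nlinarith [sq_nonneg s]

lemma sqrt_mul_le_add_div_two {a b : ℝ} (ha : 0 ≤ a) (hb : 0 ≤ b) :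
    √(a * b) ≤ (a + b) / 2 := by
  have := two_mul_le_add_sq √a √b
  rw [sq_sqrt ha, sq_sqrt hb] at this
  rw [sqrt_mul ha]
  linarith

end Real

section Integral

variable {X : Type*} [MeasurableSpace X] {μ : Measure X} {f g : X → ℝ}

lemma integrable_sqrt_mul (hf : Integrable f μ) (hg : Integrable g μ)
    (hf₀ : ∀ x, 0 ≤ f x) (hg₀ : ∀ x, 0 ≤ g x) :
    Integrable (fun x ↦ √(f x * g x)) μ := by
  refine ((hf.add hg).div_const 2).mono'
    (hf.aemeasurable.mul hg.aemeasurable).sqrt.aestronglyMeasurable (ae_of_all _ fun x ↦ ?_)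
  rw [norm_of_nonneg (sqrt_nonneg _)]
  exact sqrt_mul_le_add_div_two (hf₀ x) (hg₀ x)

lemma integral_sqrt_mul_le (hf : Integrable f μ) (hg : Integrable g μ)
    (hf₀ : ∀ x, 0 ≤ f x) (hg₀ : ∀ x, 0 ≤ g x) :
    ∫ x, √(f x * g x) ∂μ ≤ ((∫ x, f x ∂μ) + ∫ x, g x ∂μ) / 2 := by
  rw [← integral_add hf hg, ← integral_div]
  exact integral_mono (integrable_sqrt_mul hf hg hf₀ hg₀) ((hf.add hg).div_const 2)
    fun x ↦ sqrt_mul_le_add_div_two (hf₀ x) (hg₀ x)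

lemma two_mul_sub_integral_sqrt_mul_le_klDiv (hf : Integrable f μ) (hg : Integrable g μ)
    (hf₀ : ∀ x, 0 ≤ f x) (hg₀ : ∀ x, 0 ≤ g x) (hg_pos : ∀ᵐ x ∂μ, 0 < g x)
    (hfg : Integrable (fun x ↦ f x * log (f x / g x)) μ) :
    2 * ((∫ x, f x ∂μ) - ∫ x, √(f x * g x) ∂μ) ≤ klDiv μ f g := by
  have hsqrt := integrable_sqrt_mul hf hg hf₀ hg₀
  rw [← integral_sub hf hsqrt, ← integral_const_mul]
  exact integral_mono_ae ((hf.sub hsqrt).const_mul 2) hfg <|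
    hg_pos.mono fun x hx ↦ two_mul_sub_sqrt_mul_le_mul_log_div (hf₀ x) hx

end Integral

lemma IsDensity.integrable {X : Type*} [MeasurableSpace X] {μ : Measure X} {V : ℝ}
    {ρ : X → ℝ} (h : IsDensity μ V ρ) (hV : V ≠ 0) : Integrable ρ μ :=
  Integrable.of_integral_ne_zero (h.2.2 ▸ hV)

theorem fisherRao_le_sqrt_klDiv_general
    {X : Type*} [MeasurableSpace X] (lam : Measure X)
    (V : ℝ) (hV : 0 < V)
    (ρ₀ ρ₁ : X → ℝ) (h₀ : IsDensity lam V ρ₀) (h₁ : IsDensity lam V ρ₁)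
    (h₁pos : ∀ᵐ x ∂lam, 0 < ρ₁ x)
    (hint : Integrable (fun x => ρ₀ x * Real.log (ρ₀ x / ρ₁ x)) lam) :
    fisherRaoDist lam V ρ₀ ρ₁ ≤ Real.sqrt ((π / 2) * klDiv lam ρ₀ ρ₁) ∧
    0 ≤ klDiv lam ρ₀ ρ₁ := by
  have hi₀ := h₀.integrable hV.ne'
  have hi₁ := h₁.integrable hV.ne'
  set I := ∫ x, √(ρ₀ x * ρ₁ x) ∂lam
  have hI₀ : 0 ≤ I := integral_nonneg fun _ ↦ sqrt_nonneg _
  have hIV : I ≤ V := by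
    simpa [h₀.2.2, h₁.2.2] using integral_sqrt_mul_le hi₀ hi₁ h₀.2.1 h₁.2.1
  have hkl : 2 * (V - I) ≤ klDiv lam ρ₀ ρ₁ := by
    simpa [h₀.2.2] using
      two_mul_sub_integral_sqrt_mul_le_klDiv hi₀ hi₁ h₀.2.1 h₁.2.1 h₁pos hint
  refine ⟨?_, by linarith⟩
  calc fisherRaoDist lam V ρ₀ ρ₁ = √(V * arccos (1 / V * I) ^ 2) := by
        rw [sqrt_mul hV.le, sqrt_sq (arccos_nonneg _), fisherRaoDist]
    _ ≤ √(V * (π * (1 - 1 / V * I))) := by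
        gcongr
        exact arccos_sq_le_pi_mul_one_sub (by positivity) <| by
          rwa [one_div_mul_eq_div, div_le_one hV]
    _ = √(π / 2 * (2 * (V - I))) := by
        congr 1
        field_simp
    _ ≤ √(π / 2 * klDiv lam ρ₀ ρ₁) := by gcongr

/-- **Comparison of the Fisher–Rao distance and the Kullback–Leibler divergence**
(item 8 of the Proposition in Appendix B): `d_F ≤ √((π/2)·d_KL)`; in particular
`d_KL ≥ 0`. -/
theorem fisherRao_le_sqrt_klDiv
    {X : Type*} [MeasurableSpace X] (lam : Measure X) [IsFiniteMeasure lam]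
    (V : ℝ) (hV : 0 < V) (hVmass : (lam Set.univ).toReal = V)
    (ρ₀ ρ₁ : X → ℝ) (h₀ : IsDensity lam V ρ₀) (h₁ : IsDensity lam V ρ₁)
    (h₁pos : ∀ᵐ x ∂lam, 0 < ρ₁ x)
    (hint : Integrable (fun x => ρ₀ x * Real.log (ρ₀ x / ρ₁ x)) lam) :
    fisherRaoDist lam V ρ₀ ρ₁ ≤ Real.sqrt ((π / 2) * klDiv lam ρ₀ ρ₁) ∧
    0 ≤ klDiv lam ρ₀ ρ₁ :=
  fisherRao_le_sqrt_klDiv_general lam V hV ρ₀ ρ₁ h₀ h₁ h₁pos hint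
end

section
/- Let f₀ and f₁ be two distinct (as L² classes) nonnegative functions in L²(λ) with ∫ f₀² dλ = ∫ f₁² dλ = V, set θ := arccos((1/V) ∫ f₀ f₁ dλ) ∈ (0, π/2], and let f_t := (sin((1−t)θ)·f₀ + sin(tθ)·f₁)/sin θ for t ∈ [0,1], so that ρ_t := f_t² is a density of mass V for each t. Fix σ > 0. Then for every t ∈ [0,1]: d_F(ρ₀, ρ_t) = √V·t·θ and d_F(ρ_t, ρ₁) = √V·(1−t)·θ, hence the functional e(t) := σ·d_F(ρ₀, ρ_t)² + d_F(ρ_t, ρ₁)² equals V·θ²·(σt² + (1−t)²), and e attains its minimum over [0,1] at the unique point t = 1/(1+σ). (This is the computational core of the Theorem on inexact compatible density matching: the solution lies at parameter s = 1/(1+σ) along the Fisher–Rao geodesic.) -/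
open MeasureTheory Real Set

/-!
Writing `ρ = f²`, the Fisher–Rao distance is `√V` times the angle between the square roots
`f₀, f₁` on the sphere of radius `√V` in `L²(λ)`, and `f_t` is the great-circle arc from `f₀`
to `f₁`. Hence `f_t` makes the angles `tθ` and `(1 - t)θ` with the endpoints, so that
`e(t) = Vθ²(σt² + (1 - t)²)`, a quadratic in `t` with vertex `1/(1 + σ)`. That `θ > 0` is the
equality case of Cauchy–Schwarz, and `θ ≤ π/2` comes from `f₀, f₁ ≥ 0`.
-/

lemma real_inner_lt_sq_of_norm_eq_of_ne {F : Type*} [NormedAddCommGroup F]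
    [InnerProductSpace ℝ F] {u v : F} {r : ℝ} (hu : ‖u‖ = r) (hv : ‖v‖ = r) (hne : u ≠ v) :
    inner ℝ u v < r ^ 2 := by
  have hr : r ≠ 0 := by
    rintro rfl
    exact hne ((norm_eq_zero.1 hu).trans (norm_eq_zero.1 hv).symm)
  have h := inner_lt_norm_mul_iff_real (x := u) (y := v) |>.2 <| by
    rw [hu, hv]
    exact (smul_right_injective F hr).ne hne
  rwa [hu, hv, ← sq] at h

namespace MeasureTheory.MemLp

variable {X : Type*} [MeasurableSpace X] {μ : Measure X} {g h : X → ℝ}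

lemma inner_toLp_eq_integral_mul (hg : MemLp g 2 μ) (hh : MemLp h 2 μ) :
    inner ℝ (hg.toLp g) (hh.toLp h) = ∫ x, g x * h x ∂μ := by
  rw [L2.inner_def]
  refine integral_congr_ae ?_
  filter_upwards [hg.coeFn_toLp, hh.coeFn_toLp] with x hgx hhx
  simp [hgx, hhx, mul_comm]

lemma norm_toLp_eq_sqrt_integral_sq (hg : MemLp g 2 μ) :
    ‖hg.toLp g‖ = √(∫ x, g x ^ 2 ∂μ) := by
  simp_rw [sq, ← inner_toLp_eq_integral_mul hg hg, real_inner_self_eq_norm_sq,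
    sqrt_sq (norm_nonneg _)]

lemma integral_mul_lt_of_not_ae_eq {V : ℝ} (hg : MemLp g 2 μ) (hh : MemLp h 2 μ)
    (hgV : ∫ x, g x ^ 2 ∂μ = V) (hhV : ∫ x, h x ^ 2 ∂μ = V) (hne : ¬ g =ᵐ[μ] h) :
    ∫ x, g x * h x ∂μ < V := by
  have hV : 0 ≤ V := hgV ▸ integral_nonneg fun x => sq_nonneg (g x)
  rw [← inner_toLp_eq_integral_mul hg hh, ← sq_sqrt hV]
  refine real_inner_lt_sq_of_norm_eq_of_ne ?_ ?_ fun heq => hne <| (toLp_eq_toLp_iff hg hh).1 heq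
  · rw [norm_toLp_eq_sqrt_integral_sq, hgV]
  · rw [norm_toLp_eq_sqrt_integral_sq, hhV]

end MeasureTheory.MemLp

section FisherRao

variable {X : Type*} [MeasurableSpace X] {μ : Measure X} {V : ℝ}

lemma fisherRaoDist_comm (ρ₀ ρ₁ : X → ℝ) :
    fisherRaoDist μ V ρ₀ ρ₁ = fisherRaoDist μ V ρ₁ ρ₀ := by
  simp only [fisherRaoDist, mul_comm (ρ₀ _)]

lemma fisherRaoDist_sq_sq {g h : X → ℝ} (hg : ∀ᵐ x ∂μ, 0 ≤ g x) (hh : ∀ᵐ x ∂μ, 0 ≤ h x) :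
    fisherRaoDist μ V (fun x => g x ^ 2) (fun x => h x ^ 2) =
      √V * arccos ((1 / V) * ∫ x, g x * h x ∂μ) := by
  rw [fisherRaoDist, integral_congr_ae]
  filter_upwards [hg, hh] with x hgx hhx
  rw [← mul_pow, sqrt_sq (mul_nonneg hgx hhx)]

lemma sin_one_sub_mul_add_sin_mul_mul_cos (t θ : ℝ) :
    sin ((1 - t) * θ) + sin (t * θ) * cos θ = sin θ * cos (t * θ) := by
  rw [show (1 - t) * θ = θ - t * θ by ring, sin_sub]
  ring

variable {f₀ f₁ : X → ℝ} {θ t : ℝ}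

theorem fisherRaoDist_sq_slerp_left (hV : 0 < V) (hf₀ : MemLp f₀ 2 μ) (hf₁ : MemLp f₁ 2 μ)
    (hf₀nn : ∀ᵐ x ∂μ, 0 ≤ f₀ x) (hf₁nn : ∀ᵐ x ∂μ, 0 ≤ f₁ x)
    (hf₀V : ∫ x, f₀ x ^ 2 ∂μ = V) (hcos : ∫ x, f₀ x * f₁ x ∂μ = V * cos θ)
    (hθ : 0 < θ) (hθπ : θ < π) (ht : t ∈ Icc (0 : ℝ) 1) :
    fisherRaoDist μ V (fun x => f₀ x ^ 2)
        (fun x => ((sin ((1 - t) * θ) * f₀ x + sin (t * θ) * f₁ x) / sin θ) ^ 2) =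
      √V * t * θ := by
  obtain ⟨ht₀, ht₁⟩ := ht
  have hsin : 0 < sin θ := sin_pos_of_pos_of_lt_pi hθ hθπ
  have htθ : 0 ≤ t * θ ∧ t * θ ≤ π := ⟨by positivity, by nlinarith⟩
  have hsin₀ : 0 ≤ sin ((1 - t) * θ) :=
    sin_nonneg_of_nonneg_of_le_pi (mul_nonneg (by linarith) hθ.le) (by nlinarith)
  have hsin₁ : 0 ≤ sin (t * θ) := sin_nonneg_of_nonneg_of_le_pi htθ.1 htθ.2
  have hnn : ∀ᵐ x ∂μ, 0 ≤ (sin ((1 - t) * θ) * f₀ x + sin (t * θ) * f₁ x) / sin θ := by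
    filter_upwards [hf₀nn, hf₁nn] with x h₀ h₁
    positivity
  have hinner : ∫ x, f₀ x * ((sin ((1 - t) * θ) * f₀ x + sin (t * θ) * f₁ x) / sin θ) ∂μ =
      V * cos (t * θ) := by
    have hsplit : (fun x => f₀ x * ((sin ((1 - t) * θ) * f₀ x + sin (t * θ) * f₁ x) / sin θ)) =
        fun x => sin ((1 - t) * θ) / sin θ * f₀ x ^ 2 + sin (t * θ) / sin θ * (f₀ x * f₁ x) := by
      ext x; ring
    have hint : Integrable (fun x => f₀ x * f₁ x) μ := hf₀.integrable_mul hf₁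
    rw [hsplit, integral_add (hf₀.integrable_sq.const_mul _) (hint.const_mul _),
      integral_const_mul, integral_const_mul, hf₀V, hcos]
    field_simp
    linear_combination sin_one_sub_mul_add_sin_mul_mul_cos t θ
  rw [fisherRaoDist_sq_sq hf₀nn hnn, hinner, one_div, inv_mul_cancel_left₀ hV.ne',
    arccos_cos htθ.1 htθ.2, mul_assoc]

theorem fisherRaoDist_sq_slerp_right (hV : 0 < V) (hf₀ : MemLp f₀ 2 μ) (hf₁ : MemLp f₁ 2 μ)
    (hf₀nn : ∀ᵐ x ∂μ, 0 ≤ f₀ x) (hf₁nn : ∀ᵐ x ∂μ, 0 ≤ f₁ x)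
    (hf₁V : ∫ x, f₁ x ^ 2 ∂μ = V) (hcos : ∫ x, f₀ x * f₁ x ∂μ = V * cos θ)
    (hθ : 0 < θ) (hθπ : θ < π) (ht : t ∈ Icc (0 : ℝ) 1) :
    fisherRaoDist μ V
        (fun x => ((sin ((1 - t) * θ) * f₀ x + sin (t * θ) * f₁ x) / sin θ) ^ 2)
        (fun x => f₁ x ^ 2) =
      √V * (1 - t) * θ := by
  have hswap := fisherRaoDist_sq_slerp_left hV hf₁ hf₀ hf₁nn hf₀nn hf₁V
    (by simp_rw [mul_comm (f₁ _)]; exact hcos) hθ hθπ (t := 1 - t)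
    ⟨by linarith [ht.2], by linarith [ht.1]⟩
  rw [fisherRaoDist_comm, ← hswap, sub_sub_cancel]
  simp_rw [add_comm (sin (t * θ) * _)]

end FisherRao

lemma mul_sq_add_one_sub_sq_eq {σ : ℝ} (hσ : 1 + σ ≠ 0) (t : ℝ) :
    σ * t ^ 2 + (1 - t) ^ 2 =
      σ * (1 / (1 + σ)) ^ 2 + (1 - 1 / (1 + σ)) ^ 2 + (1 + σ) * (t - 1 / (1 + σ)) ^ 2 := by
  field_simp
  ring

theorem inexact_compatible_matching_minimizer_general
    {X : Type*} [MeasurableSpace X] (lam : Measure X)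
    (V : ℝ) (hV : 0 < V)
    (f₀ f₁ : X → ℝ)
    (hf₀ : MemLp f₀ 2 lam) (hf₁ : MemLp f₁ 2 lam)
    (hf₀nn : ∀ᵐ x ∂lam, 0 ≤ f₀ x) (hf₁nn : ∀ᵐ x ∂lam, 0 ≤ f₁ x)
    (hf₀V : ∫ x, (f₀ x) ^ 2 ∂lam = V) (hf₁V : ∫ x, (f₁ x) ^ 2 ∂lam = V)
    (hne : ¬ (f₀ =ᵐ[lam] f₁))
    (θ : ℝ) (hθ : θ = Real.arccos ((1 / V) * ∫ x, f₀ x * f₁ x ∂lam))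
    (f : ℝ → X → ℝ)
    (hf : ∀ t x, f t x = (Real.sin ((1 - t) * θ) * f₀ x + Real.sin (t * θ) * f₁ x) /
      Real.sin θ)
    (σ : ℝ) (hσ : 0 < σ) :
    (0 < θ ∧ θ ≤ π / 2) ∧
    (∀ t ∈ Set.Icc (0 : ℝ) 1,
      fisherRaoDist lam V (fun x => (f₀ x) ^ 2) (fun x => (f t x) ^ 2) =
        Real.sqrt V * t * θ ∧
      fisherRaoDist lam V (fun x => (f t x) ^ 2) (fun x => (f₁ x) ^ 2) =
        Real.sqrt V * (1 - t) * θ ∧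
      σ * (fisherRaoDist lam V (fun x => (f₀ x) ^ 2) (fun x => (f t x) ^ 2)) ^ 2 +
          (fisherRaoDist lam V (fun x => (f t x) ^ 2) (fun x => (f₁ x) ^ 2)) ^ 2 =
        V * θ ^ 2 * (σ * t ^ 2 + (1 - t) ^ 2)) ∧
    (1 / (1 + σ) ∈ Set.Icc (0 : ℝ) 1) ∧
    (∀ t ∈ Set.Icc (0 : ℝ) 1,
      σ * (fisherRaoDist lam V (fun x => (f₀ x) ^ 2)
            (fun x => (f (1 / (1 + σ)) x) ^ 2)) ^ 2 +
          (fisherRaoDist lam V (fun x => (f (1 / (1 + σ)) x) ^ 2)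
            (fun x => (f₁ x) ^ 2)) ^ 2 ≤
        σ * (fisherRaoDist lam V (fun x => (f₀ x) ^ 2) (fun x => (f t x) ^ 2)) ^ 2 +
          (fisherRaoDist lam V (fun x => (f t x) ^ 2) (fun x => (f₁ x) ^ 2)) ^ 2 ∧
      (t ≠ 1 / (1 + σ) →
        σ * (fisherRaoDist lam V (fun x => (f₀ x) ^ 2)
              (fun x => (f (1 / (1 + σ)) x) ^ 2)) ^ 2 +
            (fisherRaoDist lam V (fun x => (f (1 / (1 + σ)) x) ^ 2)
              (fun x => (f₁ x) ^ 2)) ^ 2 <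
          σ * (fisherRaoDist lam V (fun x => (f₀ x) ^ 2) (fun x => (f t x) ^ 2)) ^ 2 +
            (fisherRaoDist lam V (fun x => (f t x) ^ 2) (fun x => (f₁ x) ^ 2)) ^ 2)) := by
  have hc₀ : 0 ≤ (1 / V) * ∫ x, f₀ x * f₁ x ∂lam := mul_nonneg (by positivity) <|
    integral_nonneg_of_ae <| by filter_upwards [hf₀nn, hf₁nn] with x h₀ h₁ using mul_nonneg h₀ h₁
  have hc₁ : (1 / V) * ∫ x, f₀ x * f₁ x ∂lam < 1 := by
    rw [one_div_mul_eq_div, div_lt_one hV]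
    exact hf₀.integral_mul_lt_of_not_ae_eq hf₁ hf₀V hf₁V hne
  have hθpos : 0 < θ := hθ ▸ arccos_pos.2 hc₁
  have hθle : θ ≤ π / 2 := hθ ▸ arccos_le_pi_div_two.2 hc₀
  have hθπ : θ < π := by linarith [pi_pos]
  have hcos : ∫ x, f₀ x * f₁ x ∂lam = V * cos θ := by
    rw [hθ, cos_arccos (by linarith) hc₁.le]
    field_simp
  have hdist₀ t (ht : t ∈ Icc (0 : ℝ) 1) :
      fisherRaoDist lam V (fun x => (f₀ x) ^ 2) (fun x => (f t x) ^ 2) = √V * t * θ := by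
    simpa only [← hf] using
      fisherRaoDist_sq_slerp_left hV hf₀ hf₁ hf₀nn hf₁nn hf₀V hcos hθpos hθπ ht
  have hdist₁ t (ht : t ∈ Icc (0 : ℝ) 1) :
      fisherRaoDist lam V (fun x => (f t x) ^ 2) (fun x => (f₁ x) ^ 2) = √V * (1 - t) * θ := by
    simpa only [← hf] using
      fisherRaoDist_sq_slerp_right hV hf₀ hf₁ hf₀nn hf₁nn hf₁V hcos hθpos hθπ ht
  have henergy t (ht : t ∈ Icc (0 : ℝ) 1) :
      σ * (fisherRaoDist lam V (fun x => (f₀ x) ^ 2) (fun x => (f t x) ^ 2)) ^ 2 +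
          (fisherRaoDist lam V (fun x => (f t x) ^ 2) (fun x => (f₁ x) ^ 2)) ^ 2 =
        V * θ ^ 2 * (σ * t ^ 2 + (1 - t) ^ 2) := by
    rw [hdist₀ t ht, hdist₁ t ht, mul_pow, mul_pow, mul_pow, mul_pow, sq_sqrt hV.le]
    ring
  have hs : 1 / (1 + σ) ∈ Icc (0 : ℝ) 1 :=
    ⟨by positivity, (div_le_one (by positivity)).2 (by linarith)⟩
  refine ⟨⟨hθpos, hθle⟩, fun t ht => ⟨hdist₀ t ht, hdist₁ t ht, henergy t ht⟩, hs,
    fun t ht => ?_⟩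
  rw [henergy t ht, henergy _ hs, mul_sq_add_one_sub_sq_eq (by positivity) t]
  refine ⟨mul_le_mul_of_nonneg_left (le_add_of_nonneg_right (by positivity)) (by positivity),
    fun hts => mul_lt_mul_of_pos_left (lt_add_of_pos_right _ ?_) (by positivity)⟩
  have : t - 1 / (1 + σ) ≠ 0 := sub_ne_zero.2 hts
  positivity

/-- **Inexact compatible density matching along the Fisher–Rao geodesic**
(computational core of the Theorem on inexact compatible matching):
along the geodesic `ρ_t = f_t²`, one has `d_F(ρ₀, ρ_t) = √V·t·θ` and
`d_F(ρ_t, ρ₁) = √V·(1−t)·θ`, hence the functional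
`e(t) = σ·d_F(ρ₀,ρ_t)² + d_F(ρ_t,ρ₁)²` equals `V·θ²·(σt² + (1−t)²)` and is
uniquely minimized over `[0,1]` at `t = 1/(1+σ)`. -/
theorem inexact_compatible_matching_minimizer
    {X : Type*} [MeasurableSpace X] (lam : Measure X) [IsFiniteMeasure lam]
    (V : ℝ) (hV : 0 < V) (hVmass : (lam Set.univ).toReal = V)
    (f₀ f₁ : X → ℝ)
    (hf₀ : MemLp f₀ 2 lam) (hf₁ : MemLp f₁ 2 lam)
    (hf₀nn : ∀ᵐ x ∂lam, 0 ≤ f₀ x) (hf₁nn : ∀ᵐ x ∂lam, 0 ≤ f₁ x)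
    (hf₀V : ∫ x, (f₀ x) ^ 2 ∂lam = V) (hf₁V : ∫ x, (f₁ x) ^ 2 ∂lam = V)
    (hne : ¬ (f₀ =ᵐ[lam] f₁))
    (θ : ℝ) (hθ : θ = Real.arccos ((1 / V) * ∫ x, f₀ x * f₁ x ∂lam))
    (f : ℝ → X → ℝ)
    (hf : ∀ t x, f t x = (Real.sin ((1 - t) * θ) * f₀ x + Real.sin (t * θ) * f₁ x) /
      Real.sin θ)
    (σ : ℝ) (hσ : 0 < σ) :
    (0 < θ ∧ θ ≤ π / 2) ∧
    (∀ t ∈ Set.Icc (0 : ℝ) 1,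
      fisherRaoDist lam V (fun x => (f₀ x) ^ 2) (fun x => (f t x) ^ 2) =
        Real.sqrt V * t * θ ∧
      fisherRaoDist lam V (fun x => (f t x) ^ 2) (fun x => (f₁ x) ^ 2) =
        Real.sqrt V * (1 - t) * θ ∧
      σ * (fisherRaoDist lam V (fun x => (f₀ x) ^ 2) (fun x => (f t x) ^ 2)) ^ 2 +
          (fisherRaoDist lam V (fun x => (f t x) ^ 2) (fun x => (f₁ x) ^ 2)) ^ 2 =
        V * θ ^ 2 * (σ * t ^ 2 + (1 - t) ^ 2)) ∧
    (1 / (1 + σ) ∈ Set.Icc (0 : ℝ) 1) ∧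
    (∀ t ∈ Set.Icc (0 : ℝ) 1,
      σ * (fisherRaoDist lam V (fun x => (f₀ x) ^ 2)
            (fun x => (f (1 / (1 + σ)) x) ^ 2)) ^ 2 +
          (fisherRaoDist lam V (fun x => (f (1 / (1 + σ)) x) ^ 2)
            (fun x => (f₁ x) ^ 2)) ^ 2 ≤
        σ * (fisherRaoDist lam V (fun x => (f₀ x) ^ 2) (fun x => (f t x) ^ 2)) ^ 2 +
          (fisherRaoDist lam V (fun x => (f t x) ^ 2) (fun x => (f₁ x) ^ 2)) ^ 2 ∧
      (t ≠ 1 / (1 + σ) →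
        σ * (fisherRaoDist lam V (fun x => (f₀ x) ^ 2)
              (fun x => (f (1 / (1 + σ)) x) ^ 2)) ^ 2 +
            (fisherRaoDist lam V (fun x => (f (1 / (1 + σ)) x) ^ 2)
              (fun x => (f₁ x) ^ 2)) ^ 2 <
          σ * (fisherRaoDist lam V (fun x => (f₀ x) ^ 2) (fun x => (f t x) ^ 2)) ^ 2 +
            (fisherRaoDist lam V (fun x => (f t x) ^ 2) (fun x => (f₁ x) ^ 2)) ^ 2)) :=
  inexact_compatible_matching_minimizer_general lam V hV f₀ f₁ hf₀ hf₁ hf₀nn hf₁nn hf₀V hf₁V hne θ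
    hθ f hf σ hσ
end
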